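/- arXiv:1504.02553 — 4 statements merged into one kernel-verified Lean document; each statement's English description precedes it below -/
import Mathlib

section
/- If x ≥ 1 and x·exp(x²/2) = y, then x² ≥ ln(y²/ln(y²)), provided y > 1 so that ln(y²) > 0. -/
/-- If `x ≥ 1`, `y > 1` and `x·exp(x²/2) = y`, then `x² ≥ ln(y²/ln(y²))`. -/
theorem stmt1 (x y : ℝ) (hx : 1 ≤ x) (hy : 1 < y)
    (hxy : x * Real.exp (x ^ 2 / 2) = y) :
    Real.log (y ^ 2 / Real.log (y ^ 2)) ≤ x ^ 2 := by
  have hx0 : 0 < x := lt_of_lt_of_le one_pos hx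
  have hy2 : y ^ 2 = x ^ 2 * Real.exp (x ^ 2) := by
    rw [← hxy, mul_pow, ← Real.exp_nat_mul]; ring_nf
  have hlogy2 : Real.log (y ^ 2) = 2 * Real.log x + x ^ 2 := by
    rw [hy2, Real.log_mul (by positivity) (Real.exp_ne_zero _), Real.log_exp,
      Real.log_pow]
    push_cast; ring
  have hlogx : 0 ≤ Real.log x := Real.log_nonneg hx
  have hlogy2pos : 0 < Real.log (y ^ 2) := by
    rw [hlogy2]; positivity
  have harg : 0 < y ^ 2 / Real.log (y ^ 2) := by positivity
  rw [Real.log_le_iff_le_exp harg, div_le_iff₀ hlogy2pos, hlogy2, hy2]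
  nlinarith [Real.exp_pos (x ^ 2)]
end

section
/- If x ≥ 1, y > e and x·exp(x²/2) = y, then ln(y²/ln(y²)) ≤ x² ≤ ln(y²/ln(y²/ln(y²))). -/
/-!
With `u = x²` we have `y² = u·eᵘ`, so `L := log (y²) = u + log u ≥ u`. The lower bound is
`L - log L ≤ u`, i.e. `log u ≤ log L`. Since `log (y² / t) = L - log t`, the upper bound
`L - log (L - log L) ≥ u` reads `log (L - log L) ≤ log u`, which is the lower bound again
after taking logarithms.
-/

namespace Real

lemma log_mul_exp_self {u : ℝ} (hu : 0 < u) : log (u * exp u) = u + log u := by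
  rw [log_mul hu.ne' (exp_pos u).ne', log_exp, add_comm]

lemma log_div_log_le_and_le_log_div_log_div_log_of_eq_mul_exp {u w : ℝ} (hu : 1 ≤ u)
    (hw : w = u * exp u) :
    log (w / log w) ≤ u ∧ u ≤ log (w / log (w / log w)) := by
  have hu0 : 0 < u := zero_lt_one.trans_le hu
  have hw0 : w ≠ 0 := by rw [hw]; positivity
  set L := log w with hL_def
  have hL : L = u + log u := by rw [hL_def, hw, log_mul_exp_self hu0]
  have hlogu : 0 ≤ log u := log_nonneg hu
  have hL0 : 0 < L := by linarith
  have hsub_pos : 0 < L - log L := by linarith [log_le_sub_one_of_pos hL0]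
  have hlower : L - log L ≤ u := by
    linarith [log_le_log hu0 (show u ≤ L by linarith)]
  rw [log_div hw0 hL0.ne']
  refine ⟨hlower, ?_⟩
  rw [log_div hw0 hsub_pos.ne']
  linarith [log_le_log hsub_pos hlower]

end Real

theorem stmt2_general (x y : ℝ) (hx : 1 ≤ x)
    (hxy : x * Real.exp (x ^ 2 / 2) = y) :
    Real.log (y ^ 2 / Real.log (y ^ 2)) ≤ x ^ 2 ∧
      x ^ 2 ≤ Real.log (y ^ 2 / Real.log (y ^ 2 / Real.log (y ^ 2))) := by
  have hy_sq : y ^ 2 = x ^ 2 * Real.exp (x ^ 2) := by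
    rw [← hxy, mul_pow, ← Real.exp_nat_mul]
    ring_nf
  exact Real.log_div_log_le_and_le_log_div_log_div_log_of_eq_mul_exp (by nlinarith) hy_sq

/-- If `x ≥ 1`, `y > e` and `x·exp(x²/2) = y`, then
`ln(y²/ln(y²)) ≤ x² ≤ ln(y²/ln(y²/ln(y²)))`. -/
theorem stmt2 (x y : ℝ) (hx : 1 ≤ x) (hy : Real.exp 1 < y)
    (hxy : x * Real.exp (x ^ 2 / 2) = y) :
    Real.log (y ^ 2 / Real.log (y ^ 2)) ≤ x ^ 2 ∧
      x ^ 2 ≤ Real.log (y ^ 2 / Real.log (y ^ 2 / Real.log (y ^ 2))) :=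
  stmt2_general x y hx hxy
end

section
/- The standard Gaussian upper quantile satisfies z_{1−α} = √(−2 ln α − ln|ln α| − ln(4π)) · (1 + O(ln|ln α| / (ln α)²)) as α → 0⁺. -/
/-!
The Mills-ratio bounds `φ x * x / (1 + x²) ≤ 1 - Φ x ≤ φ x / x`, each obtained by comparing
`φ` with an explicit derivative on `(x, ∞)`, pin `-log (1 - Φ x)` between `T x` and
`T x + 1 / x²`, where `T = tailExponent`, `T x = x² / 2 + log x + log (2π) / 2`.
Put `u = -log α`, `S = 2u - log u - log (4π)` and `ε = log u / u²`. Then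
`T (√S) = u + O(log u / u)` and `1 / S = O(1 / u)`, while moving the argument to `√S (1 ± ε)`
changes `T` by about `± S ε ≈ ± 2 log u / u`, which dominates both errors once `log u ≥ 8`.
Hence `1 - Φ (√S (1 + ε)) ≤ α ≤ 1 - Φ (√S (1 - ε))`, and monotonicity of `Φ` gives
`|z_{1-α} - √S| ≤ √S ε`.
-/

open Filter Set

/-- The standard normal cumulative distribution function. -/
noncomputable def Phi (z : ℝ) : ℝ :=
  ∫ t in Set.Iic z, (Real.sqrt (2 * Real.pi))⁻¹ * Real.exp (-t ^ 2 / 2)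

open MeasureTheory ProbabilityTheory Real Topology

local notation "φ" => gaussianPDFReal 0 1

lemma gaussianPDFReal_zero_one (t : ℝ) : φ t = (√(2 * π))⁻¹ * exp (-t ^ 2 / 2) := by
  simp [gaussianPDFReal]

lemma Phi_eq_integral_gaussianPDFReal (z : ℝ) : Phi z = ∫ t in Iic z, φ t := by
  simp only [Phi, gaussianPDFReal_zero_one]

lemma one_sub_Phi (x : ℝ) : 1 - Phi x = ∫ t in Ioi x, φ t := by
  rw [← integral_gaussianPDFReal_eq_one 0 one_ne_zero, ← intervalIntegral.integral_Iic_add_Ioi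
    (integrable_gaussianPDFReal 0 1).integrableOn (integrable_gaussianPDFReal 0 1).integrableOn,
    Phi_eq_integral_gaussianPDFReal, add_sub_cancel_left]

lemma Phi_strictMono : StrictMono Phi := by
  intro a b hab
  have hpos : 0 < ∫ t in Ioc a b, φ t := by
    rw [setIntegral_pos_iff_support_of_nonneg_ae
      (ae_of_all _ (gaussianPDFReal_nonneg 0 1)) (integrable_gaussianPDFReal 0 1).integrableOn,
      Function.support_eq_univ (fun t ↦ (gaussianPDFReal_pos 0 1 t one_ne_zero).ne'),
      univ_inter, volume_Ioc]
    simpa using hab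
  have hsplit : Phi b = Phi a + ∫ t in Ioc a b, φ t := by
    rw [Phi_eq_integral_gaussianPDFReal, Phi_eq_integral_gaussianPDFReal,
      ← setIntegral_union (Iic_disjoint_Ioc le_rfl) measurableSet_Ioc
      (integrable_gaussianPDFReal 0 1).integrableOn (integrable_gaussianPDFReal 0 1).integrableOn,
      Iic_union_Ioc_eq_Iic hab.le]
  linarith

lemma hasDerivAt_gaussianPDFReal_zero_one (t : ℝ) : HasDerivAt φ (-t * φ t) t := by
  have h : HasDerivAt (fun t : ℝ ↦ -t ^ 2 / 2) (-t) t :=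
    ((hasDerivAt_pow 2 t).neg.div_const 2).congr_deriv (by ring)
  rw [funext gaussianPDFReal_zero_one]
  exact (h.exp.const_mul (√(2 * π))⁻¹).congr_deriv (by ring)

lemma tendsto_gaussianPDFReal_zero_one_atTop : Tendsto φ atTop (𝓝 0) := by
  have h : Tendsto (fun t : ℝ ↦ -t ^ 2 / 2) atTop atBot :=
    (tendsto_neg_atTop_atBot.comp (tendsto_pow_atTop two_ne_zero)).atBot_div_const two_pos
  simpa [funext gaussianPDFReal_zero_one] using
    (tendsto_exp_atBot.comp h).const_mul (√(2 * π))⁻¹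

lemma integrable_mul_gaussianPDFReal_zero_one : Integrable fun t ↦ t * φ t := by
  convert (integrable_mul_exp_neg_mul_sq (b := 1 / 2) one_half_pos).const_mul (√(2 * π))⁻¹
    using 2 with t
  rw [gaussianPDFReal_zero_one]; ring_nf

lemma integral_Ioi_mul_gaussianPDFReal_zero_one (x : ℝ) : ∫ t in Ioi x, t * φ t = φ x := by
  have h := integral_Ioi_of_hasDerivAt_of_tendsto' (f := fun t ↦ -φ t) (f' := fun t ↦ t * φ t)
    (a := x) (fun t _ ↦ (hasDerivAt_gaussianPDFReal_zero_one t).neg.congr_deriv (by ring))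
    integrable_mul_gaussianPDFReal_zero_one.integrableOn
    (neg_zero (G := ℝ) ▸ tendsto_gaussianPDFReal_zero_one_atTop.neg)
  simpa using h

lemma one_sub_Phi_le {x : ℝ} (hx : 0 < x) : 1 - Phi x ≤ φ x / x := by
  rw [one_sub_Phi, ← integral_Ioi_mul_gaussianPDFReal_zero_one, ← integral_div]
  refine setIntegral_mono_on (integrable_gaussianPDFReal 0 1).integrableOn
    (integrable_mul_gaussianPDFReal_zero_one.div_const x).integrableOn measurableSet_Ioi
    fun t ht ↦ ?_
  rw [mul_div_right_comm]
  exact le_mul_of_one_le_left (gaussianPDFReal_nonneg 0 1 t) ((one_le_div hx).2 (le_of_lt ht))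

lemma hasDerivAt_neg_div_one_add_sq_mul_gaussianPDFReal (t : ℝ) :
    HasDerivAt (fun t ↦ -(t / (1 + t ^ 2) * φ t)) (φ t * (1 - 2 / (1 + t ^ 2) ^ 2)) t := by
  have hden : HasDerivAt (fun t : ℝ ↦ 1 + t ^ 2) (2 * t) t :=
    ((hasDerivAt_pow 2 t).const_add 1).congr_deriv (by ring)
  have hquot := (hasDerivAt_id t).div hden (by positivity)
  refine (hquot.mul (hasDerivAt_gaussianPDFReal_zero_one t)).neg.congr_deriv ?_
  simp only [id, Pi.div_apply]
  field_simp
  ring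

lemma integrable_gaussianPDFReal_mul_one_sub :
    Integrable fun t ↦ φ t * (1 - 2 / (1 + t ^ 2) ^ 2) := by
  refine (integrable_gaussianPDFReal 0 1).mono' (by fun_prop) (ae_of_all _ fun t ↦ ?_)
  have hw : 0 ≤ 2 / (1 + t ^ 2) ^ 2 := by positivity
  have hw2 : 2 / (1 + t ^ 2) ^ 2 ≤ 2 :=
    div_le_self zero_le_two (one_le_pow₀ (le_add_of_nonneg_right (sq_nonneg t)))
  rw [norm_mul, Real.norm_of_nonneg (gaussianPDFReal_nonneg 0 1 t)]
  refine mul_le_of_le_one_right (gaussianPDFReal_nonneg 0 1 t) ?_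
  rw [Real.norm_eq_abs, abs_le]
  constructor <;> linarith

lemma tendsto_div_one_add_sq_mul_gaussianPDFReal :
    Tendsto (fun t ↦ t / (1 + t ^ 2) * φ t) atTop (𝓝 0) := by
  refine squeeze_zero_norm (fun t ↦ ?_) tendsto_gaussianPDFReal_zero_one_atTop
  rw [norm_mul, Real.norm_of_nonneg (gaussianPDFReal_nonneg 0 1 t), norm_div,
    Real.norm_of_nonneg (by positivity : (0 : ℝ) ≤ 1 + t ^ 2), Real.norm_eq_abs]
  refine mul_le_of_le_one_left (gaussianPDFReal_nonneg 0 1 t)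
    (div_le_one_of_le₀ ?_ (by positivity))
  nlinarith [abs_nonneg t, sq_abs t]

lemma mul_div_one_add_sq_le_one_sub_Phi (x : ℝ) : φ x * (x / (1 + x ^ 2)) ≤ 1 - Phi x := by
  have h := integral_Ioi_of_hasDerivAt_of_tendsto' (a := x)
    (fun t _ ↦ hasDerivAt_neg_div_one_add_sq_mul_gaussianPDFReal t)
    integrable_gaussianPDFReal_mul_one_sub.integrableOn
    (neg_zero (G := ℝ) ▸ tendsto_div_one_add_sq_mul_gaussianPDFReal.neg)
  rw [one_sub_Phi]
  calc φ x * (x / (1 + x ^ 2)) = ∫ t in Ioi x, φ t * (1 - 2 / (1 + t ^ 2) ^ 2) := by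
        rw [h]; ring
    _ ≤ ∫ t in Ioi x, φ t := by
      refine setIntegral_mono integrable_gaussianPDFReal_mul_one_sub.integrableOn
        (integrable_gaussianPDFReal 0 1).integrableOn fun t ↦ ?_
      exact mul_le_of_le_one_right (gaussianPDFReal_nonneg 0 1 t)
        (sub_le_self 1 (by positivity))

noncomputable def tailExponent (x : ℝ) : ℝ := x ^ 2 / 2 + log x + log (2 * π) / 2

lemma gaussianPDFReal_div_eq_exp {x : ℝ} (hx : 0 < x) : φ x / x = exp (-tailExponent x) := by
  have hsqrt : exp (log (2 * π) / 2) = √(2 * π) := by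
    rw [← log_sqrt (by positivity), exp_log (by positivity)]
  rw [gaussianPDFReal_zero_one, tailExponent, neg_add, neg_add, exp_add, exp_add,
    exp_neg (log x), exp_log hx, exp_neg (log (2 * π) / 2), hsqrt, neg_div]
  ring

lemma one_sub_Phi_le_of_le_tailExponent {α x : ℝ} (hα : 0 < α) (hx : 0 < x)
    (h : -log α ≤ tailExponent x) : 1 - Phi x ≤ α :=
  calc 1 - Phi x ≤ φ x / x := one_sub_Phi_le hx
    _ = exp (-tailExponent x) := gaussianPDFReal_div_eq_exp hx
    _ ≤ exp (log α) := exp_le_exp.2 (by linarith)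
    _ = α := exp_log hα

lemma le_one_sub_Phi_of_tailExponent_le {α x : ℝ} (hα : 0 < α) (hx : 0 < x)
    (h : tailExponent x + 1 / x ^ 2 ≤ -log α) : α ≤ 1 - Phi x := by
  have hexp : exp (-(1 / x ^ 2)) ≤ x ^ 2 / (1 + x ^ 2) := by
    rw [exp_neg, show x ^ 2 / (1 + x ^ 2) = (1 + 1 / x ^ 2)⁻¹ by field_simp; ring]
    exact inv_anti₀ (by positivity) (by linarith [add_one_le_exp (1 / x ^ 2)])
  calc α = exp (log α) := (exp_log hα).symm
    _ ≤ exp (-tailExponent x) * exp (-(1 / x ^ 2)) := by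
      rw [← exp_add]; exact exp_le_exp.2 (by linarith)
    _ ≤ φ x / x * (x ^ 2 / (1 + x ^ 2)) := by
      rw [gaussianPDFReal_div_eq_exp hx]; gcongr
    _ = φ x * (x / (1 + x ^ 2)) := by field_simp
    _ ≤ 1 - Phi x := mul_div_one_add_sq_le_one_sub_Phi x

lemma mem_Icc_of_Phi_eq {α z x₁ x₂ : ℝ} (hz : Phi z = 1 - α) (h₁ : α ≤ 1 - Phi x₁)
    (h₂ : 1 - Phi x₂ ≤ α) : z ∈ Icc x₁ x₂ :=
  ⟨Phi_strictMono.le_iff_le.1 (by linarith), Phi_strictMono.le_iff_le.1 (by linarith)⟩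

lemma tailExponent_sqrt_mul {S δ : ℝ} (hS : 0 < S) (hδ : 0 < 1 + δ) :
    tailExponent (√S * (1 + δ)) =
      S * (1 + δ) ^ 2 / 2 + log S / 2 + log (1 + δ) + log (2 * π) / 2 := by
  rw [tailExponent, mul_pow, sq_sqrt hS.le, log_mul (by positivity) hδ.ne', log_sqrt hS.le]
  ring

lemma log_four_mul_pi : log (4 * π) = log 2 + log (2 * π) := by
  rw [← log_mul two_ne_zero (by positivity)]; ring_nf

section Asymptotics

variable {u S : ℝ}

lemma one_add_log_add_log_sq_le (hu : 0 < u) (hL : 0 ≤ log u) :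
    1 + log u + log u ^ 2 / 2 ≤ u := by
  simpa [exp_log hu] using quadratic_le_exp_of_nonneg hL

lemma log_div_sq_le_half (hu : 0 < u) (hL : 8 ≤ log u) : log u / u ^ 2 ≤ 1 / 2 := by
  have hquad := one_add_log_add_log_sq_le hu (by linarith)
  rw [div_le_iff₀ (by positivity)]
  nlinarith

lemma log_four_mul_pi_le_log (hu : 0 < u) (hL : 8 ≤ log u) : log (4 * π) ≤ log u := by
  have hquad := one_add_log_add_log_sq_le hu (by linarith)
  exact log_le_log (by positivity) (by nlinarith [pi_le_four])

lemma le_two_mul_sub_log_sub_log_four_mul_pi (hu : 0 < u) (hL : 8 ≤ log u) :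
    u ≤ 2 * u - log u - log (4 * π) := by
  have hquad := one_add_log_add_log_sq_le hu (by linarith)
  nlinarith [log_four_mul_pi_le_log hu hL]

lemma log_le_sq_mul_log_div_sq (hu : 0 < u) (hL : 0 ≤ log u) (huS : u ≤ S) :
    log u ≤ S ^ 2 * (log u / u ^ 2) :=
  calc log u = u ^ 2 * (log u / u ^ 2) := by field_simp
    _ ≤ S ^ 2 * (log u / u ^ 2) := by gcongr

lemma le_tailExponent_sqrt_mul_one_add (hu : 0 < u) (hL : 8 ≤ log u)
    (hS : S = 2 * u - log u - log (4 * π)) :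
    u ≤ tailExponent (√S * (1 + log u / u ^ 2)) := by
  set ε := log u / u ^ 2
  have huS : u ≤ S := hS ▸ le_two_mul_sub_log_sub_log_four_mul_pi hu hL
  have hS0 : 0 < S := hu.trans_le huS
  have hε0 : 0 ≤ ε := by positivity
  have hSε := log_le_sq_mul_log_div_sq hu (by linarith) huS
  have h4π := log_four_mul_pi_le_log hu hL
  have hlogS : log 2 + log u - (2 * u - S) / S ≤ log S := by
    have h := one_sub_inv_le_log_of_pos (div_pos hS0 (by positivity : (0 : ℝ) < 2 * u))
    rw [log_div hS0.ne' (by positivity), log_mul two_ne_zero hu.ne', inv_div] at h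
    have : 1 - 2 * u / S = -((2 * u - S) / S) := by field_simp; ring
    linarith
  have hgap : (2 * u - S) / S ≤ 2 * (S * ε) := by
    rw [div_le_iff₀ hS0]; nlinarith
  rw [tailExponent_sqrt_mul hS0 (by linarith)]
  nlinarith [log_four_mul_pi, log_nonneg (le_add_of_nonneg_right hε0),
    mul_nonneg hS0.le (sq_nonneg ε)]

lemma tailExponent_sqrt_mul_one_sub_add_le (hu : 0 < u) (hL : 8 ≤ log u)
    (hS : S = 2 * u - log u - log (4 * π)) :
    tailExponent (√S * (1 - log u / u ^ 2)) + 1 / (√S * (1 - log u / u ^ 2)) ^ 2 ≤ u := by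
  set ε := log u / u ^ 2
  have huS : u ≤ S := hS ▸ le_two_mul_sub_log_sub_log_four_mul_pi hu hL
  have hS0 : 0 < S := hu.trans_le huS
  have hε0 : 0 ≤ ε := by positivity
  have hε1 : ε ≤ 1 / 2 := log_div_sq_le_half hu hL
  have hSε := log_le_sq_mul_log_div_sq hu (by linarith) huS
  have hlogS : log S ≤ log 2 + log u := by
    rw [← log_mul two_ne_zero hu.ne']
    have h4π : 0 ≤ log (4 * π) := log_nonneg (by linarith [pi_gt_three])
    exact log_le_log hS0 (by linarith)
  have hinv : 1 / (√S * (1 - ε)) ^ 2 ≤ S * ε / 2 := by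
    have hquarter : 1 / 4 ≤ (1 - ε) ^ 2 := by nlinarith
    rw [mul_pow, sq_sqrt hS0.le, div_le_iff₀ (by positivity)]
    nlinarith [mul_le_mul_of_nonneg_left hquarter (by positivity : 0 ≤ S ^ 2 * ε)]
  rw [sub_eq_add_neg, tailExponent_sqrt_mul hS0 (by linarith), ← sub_eq_add_neg]
  nlinarith [log_four_mul_pi, log_nonpos (by linarith : 0 ≤ 1 - ε) (by linarith : 1 - ε ≤ 1),
    mul_nonneg hS0.le hε0]

lemma abs_sub_sqrt_le_of_Phi_eq {α z : ℝ} (hα : 0 < α) (hz : Phi z = 1 - α)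
    (hαu : -log α = u) (hu : 0 < u) (hL : 8 ≤ log u) (hS : S = 2 * u - log u - log (4 * π)) :
    |z - √S| ≤ √S * (log u / u ^ 2) := by
  have hS0 : 0 < S := hu.trans_le (hS ▸ le_two_mul_sub_log_sub_log_four_mul_pi hu hL)
  have hε1 : log u / u ^ 2 < 1 := (log_div_sq_le_half hu hL).trans_lt one_half_lt_one
  have hε0 : 0 ≤ log u / u ^ 2 := by positivity
  have hsqrt : 0 < √S := sqrt_pos.2 hS0
  subst hαu
  have hz_mem := mem_Icc_of_Phi_eq hz
    (le_one_sub_Phi_of_tailExponent_le hα (mul_pos hsqrt (by linarith))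
      (tailExponent_sqrt_mul_one_sub_add_le hu hL hS))
    (one_sub_Phi_le_of_le_tailExponent hα (mul_pos hsqrt (by linarith))
      (le_tailExponent_sqrt_mul_one_add hu hL hS))
  rw [abs_sub_le_iff]
  constructor <;> linarith [hz_mem.1, hz_mem.2]

end Asymptotics

/-- The standard Gaussian upper quantile satisfies
`z_{1−α} = √(−2 ln α − ln|ln α| − ln(4π)) · (1 + O(ln|ln α|/(ln α)²))` as `α → 0⁺`. -/
theorem stmt4 (z : ℝ → ℝ) (hz : ∀ α ∈ Set.Ioo (0 : ℝ) 1, Phi (z α) = 1 - α) :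
    ∃ C : ℝ, ∀ᶠ α in nhdsWithin 0 (Set.Ioi (0 : ℝ)),
      |z α - Real.sqrt (-2 * Real.log α - Real.log |Real.log α| - Real.log (4 * Real.pi))| ≤
        C * Real.sqrt (-2 * Real.log α - Real.log |Real.log α| - Real.log (4 * Real.pi)) *
          (Real.log |Real.log α| / (Real.log α) ^ 2) := by
  refine ⟨1, ?_⟩
  have hu : Tendsto (fun α ↦ -log α) (𝓝[>] 0) atTop :=
    tendsto_neg_atBot_atTop.comp tendsto_log_nhdsGT_zero
  filter_upwards [Ioo_mem_nhdsGT one_pos, hu.eventually_gt_atTop 0,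
    hu.eventually (tendsto_log_atTop.eventually_ge_atTop 8)] with α hα hu0 hL
  rw [one_mul, log_abs, ← log_neg_eq_log (log α), ← neg_sq (log α)]
  refine abs_sub_sqrt_le_of_Phi_eq hα.1 (hz α hα) rfl hu0 hL ?_
  ring
end

section
/- Let x_n → ∞ with x_n = o(n^{3/10}), g₁, g₂ ∈ ℝ, a₀ = g₁/6, a₁ = (g₂ − 3g₁²)/24, and define the second-order adjusted quantile y_n = x_n + (g₁/(6√n)) x_n² + ((3g₂ − 4g₁²)/(72 n)) x_n³. Then −y_n²/2 + a₀ y_n³/√n + a₁ y_n⁴/n = −x_n²/2 + o(1) as n → ∞. -/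
open Filter

/-- Each monomial `x n ^ k / (√n) ^ m` with `3k ≤ 5m`, `0 < k` tends to `0`
when `x n = o(n^{3/10})`. -/
lemma stmt14_mono (x : ℕ → ℝ)
    (hxo : Tendsto (fun n : ℕ => x n / (n : ℝ) ^ ((3 : ℝ) / 10)) atTop (nhds 0))
    (k m : ℕ) (hk : 0 < k) (h : 3 * k ≤ 5 * m) :
    Tendsto (fun n : ℕ => (x n) ^ k / (Real.sqrt n) ^ m) atTop (nhds 0) := by
  have hg : Tendsto (fun n : ℕ => |x n / (n : ℝ) ^ ((3 : ℝ) / 10)| ^ k) atTop (nhds 0) := by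
    have := (hxo.abs).pow k
    simpa [zero_pow hk.ne'] using this
  apply squeeze_zero_norm' _ hg
  filter_upwards [eventually_ge_atTop 1] with n hn
  have hn1 : (1 : ℝ) ≤ (n : ℝ) := by exact_mod_cast hn
  have hn0 : (0 : ℝ) ≤ (n : ℝ) := by linarith
  have hsm : (Real.sqrt n) ^ m = (n : ℝ) ^ ((m : ℝ) / 2) := by
    rw [Real.sqrt_eq_rpow, ← Real.rpow_natCast ((n : ℝ) ^ ((1 : ℝ) / 2)) m,
      ← Real.rpow_mul hn0]
    ring_nf
  have hpow : ((n : ℝ) ^ ((3 : ℝ) / 10)) ^ k = (n : ℝ) ^ ((3 : ℝ) / 10 * k) := by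
    rw [← Real.rpow_natCast ((n : ℝ) ^ ((3 : ℝ) / 10)) k, ← Real.rpow_mul hn0]
  have hexp : (3 : ℝ) / 10 * k ≤ (m : ℝ) / 2 := by
    have : ((3 * k : ℕ) : ℝ) ≤ ((5 * m : ℕ) : ℝ) := by exact_mod_cast h
    push_cast at this
    linarith
  have hle : ((n : ℝ) ^ ((3 : ℝ) / 10)) ^ k ≤ (Real.sqrt n) ^ m := by
    rw [hsm, hpow]
    exact Real.rpow_le_rpow_of_exponent_le hn1 hexp
  have hbpos : (0 : ℝ) < ((n : ℝ) ^ ((3 : ℝ) / 10)) ^ k := by positivity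
  have habs : ‖(x n) ^ k / (Real.sqrt n) ^ m‖ = |x n| ^ k / (Real.sqrt n) ^ m := by
    rw [Real.norm_eq_abs, abs_div, abs_pow, abs_of_nonneg (by positivity :
      (0 : ℝ) ≤ (Real.sqrt n) ^ m)]
  rw [habs]
  calc |x n| ^ k / (Real.sqrt n) ^ m
      ≤ |x n| ^ k / ((n : ℝ) ^ ((3 : ℝ) / 10)) ^ k := by
        gcongr
    _ = |x n / (n : ℝ) ^ ((3 : ℝ) / 10)| ^ k := by
        rw [abs_div, div_pow, abs_of_nonneg (by positivity : (0:ℝ) ≤ (n : ℝ) ^ ((3:ℝ)/10))]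

/-- Second-order exponent cancellation: with `a₀ = g₁/6`, `a₁ = (g₂ − 3g₁²)/24` and
`y_n = x_n + (g₁/(6√n))x_n² + ((3g₂ − 4g₁²)/(72n))x_n³`, if `x_n → ∞` and
`x_n = o(n^{3/10})`, then `−y_n²/2 + a₀y_n³/√n + a₁y_n⁴/n = −x_n²/2 + o(1)`. -/
theorem stmt14 (g₁ g₂ : ℝ) (x y : ℕ → ℝ)
    (hx : Tendsto x atTop atTop)
    (hxo : Tendsto (fun n : ℕ => x n / (n : ℝ) ^ ((3 : ℝ) / 10)) atTop (nhds 0))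
    (hy : ∀ n, y n = x n + (g₁ / (6 * Real.sqrt n)) * (x n) ^ 2 +
      ((3 * g₂ - 4 * g₁ ^ 2) / (72 * n)) * (x n) ^ 3) :
    Tendsto
      (fun n : ℕ =>
        (-(y n) ^ 2 / 2 + (g₁ / 6) * (y n) ^ 3 / Real.sqrt n +
            ((g₂ - 3 * g₁ ^ 2) / 24) * (y n) ^ 4 / n) - (-(x n) ^ 2 / 2))
      atTop (nhds 0) := by
  set c5 : ℝ := g₁ * g₂ / 24 - 19 * g₁ ^ 3 / 216 with hc5
  set c6 : ℝ := 7 * g₂ ^ 2 / 1152 - g₁ ^ 2 * g₂ / 72 - g₁ ^ 4 / 324 with hc6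
  set c7 : ℝ := 5 * g₁ * g₂ ^ 2 / 1152 - 83 * g₁ ^ 3 * g₂ / 5184 + g₁ ^ 5 / 81 with hc7
  set c8 : ℝ := g₂ ^ 3 / 2304 - g₁ ^ 2 * g₂ ^ 2 / 576 + 43 * g₁ ^ 4 * g₂ / 31104 +
    5 * g₁ ^ 6 / 31104 with hc8
  set c9 : ℝ := 13 * g₁ * g₂ ^ 3 / 82944 - 13 * g₁ ^ 3 * g₂ ^ 2 / 15552 +
    125 * g₁ ^ 5 * g₂ / 93312 - 47 * g₁ ^ 7 / 69984 with hc9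
  set c10 : ℝ := g₂ ^ 4 / 82944 - g₁ ^ 2 * g₂ ^ 3 / 13824 + 35 * g₁ ^ 4 * g₂ ^ 2 / 248832 -
    29 * g₁ ^ 6 * g₂ / 279936 + g₁ ^ 8 / 46656 with hc10
  set c11 : ℝ := g₁ * g₂ ^ 4 / 497664 - 7 * g₁ ^ 3 * g₂ ^ 3 / 497664 +
    13 * g₁ ^ 5 * g₂ ^ 2 / 373248 - 31 * g₁ ^ 7 * g₂ / 839808 + g₁ ^ 9 / 69984 with hc11
  set c12 : ℝ := g₂ ^ 5 / 7962624 - 25 * g₁ ^ 2 * g₂ ^ 4 / 23887872 +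
    5 * g₁ ^ 4 * g₂ ^ 3 / 1492992 - 35 * g₁ ^ 6 * g₂ ^ 2 / 6718464 +
    5 * g₁ ^ 8 * g₂ / 1259712 - g₁ ^ 10 / 839808 with hc12
  have key : ∀ᶠ n in atTop,
      ((-(y n) ^ 2 / 2 + (g₁ / 6) * (y n) ^ 3 / Real.sqrt n +
          ((g₂ - 3 * g₁ ^ 2) / 24) * (y n) ^ 4 / n) - (-(x n) ^ 2 / 2)) =
      c5 * ((x n) ^ 5 / (Real.sqrt n) ^ 3) + c6 * ((x n) ^ 6 / (Real.sqrt n) ^ 4) +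
      c7 * ((x n) ^ 7 / (Real.sqrt n) ^ 5) + c8 * ((x n) ^ 8 / (Real.sqrt n) ^ 6) +
      c9 * ((x n) ^ 9 / (Real.sqrt n) ^ 7) + c10 * ((x n) ^ 10 / (Real.sqrt n) ^ 8) +
      c11 * ((x n) ^ 11 / (Real.sqrt n) ^ 9) + c12 * ((x n) ^ 12 / (Real.sqrt n) ^ 10) := by
    filter_upwards [eventually_ge_atTop 1] with n hn
    have hn1 : (1 : ℝ) ≤ (n : ℝ) := by exact_mod_cast hn
    have hs0 : (0 : ℝ) < Real.sqrt n := Real.sqrt_pos.mpr (by linarith)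
    have hs2 : Real.sqrt n ^ 2 = (n : ℝ) := Real.sq_sqrt (by linarith)
    rw [hy n]
    set s := Real.sqrt (n : ℝ) with hsdef
    rw [← hs2]
    field_simp
    ring
  have h5 : Tendsto (fun n : ℕ => c5 * ((x n) ^ 5 / (Real.sqrt n) ^ 3)) atTop (nhds 0) := by
    simpa using (stmt14_mono x hxo 5 3 (by norm_num) (by norm_num)).const_mul c5
  have h6 : Tendsto (fun n : ℕ => c6 * ((x n) ^ 6 / (Real.sqrt n) ^ 4)) atTop (nhds 0) := by
    simpa using (stmt14_mono x hxo 6 4 (by norm_num) (by norm_num)).const_mul c6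
  have h7 : Tendsto (fun n : ℕ => c7 * ((x n) ^ 7 / (Real.sqrt n) ^ 5)) atTop (nhds 0) := by
    simpa using (stmt14_mono x hxo 7 5 (by norm_num) (by norm_num)).const_mul c7
  have h8 : Tendsto (fun n : ℕ => c8 * ((x n) ^ 8 / (Real.sqrt n) ^ 6)) atTop (nhds 0) := by
    simpa using (stmt14_mono x hxo 8 6 (by norm_num) (by norm_num)).const_mul c8
  have h9 : Tendsto (fun n : ℕ => c9 * ((x n) ^ 9 / (Real.sqrt n) ^ 7)) atTop (nhds 0) := by
    simpa using (stmt14_mono x hxo 9 7 (by norm_num) (by norm_num)).const_mul c9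
  have h10 : Tendsto (fun n : ℕ => c10 * ((x n) ^ 10 / (Real.sqrt n) ^ 8)) atTop (nhds 0) := by
    simpa using (stmt14_mono x hxo 10 8 (by norm_num) (by norm_num)).const_mul c10
  have h11 : Tendsto (fun n : ℕ => c11 * ((x n) ^ 11 / (Real.sqrt n) ^ 9)) atTop (nhds 0) := by
    simpa using (stmt14_mono x hxo 11 9 (by norm_num) (by norm_num)).const_mul c11
  have h12 : Tendsto (fun n : ℕ => c12 * ((x n) ^ 12 / (Real.sqrt n) ^ 10)) atTop (nhds 0) := by
    simpa using (stmt14_mono x hxo 12 10 (by norm_num) (by norm_num)).const_mul c12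
  have hsum := ((((((h5.add h6).add h7).add h8).add h9).add h10).add h11).add h12
  simp only [add_zero] at hsum
  exact hsum.congr' (EventuallyEq.symm key)
end
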